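/- Let the sequences (Y_t, U_{1t}, U_{2t}, U_{3t}, G_t) be generated by the SDAO algorithm: Y_{t+1} minimizes the surrogate Ψ̂(·, L_t; Y_t) over the box B = {Y : max_{ijk}|Y_{ijk}| ≤ a}, and U_{1,t+1}, U_{2,t+1}, U_{3,t+1}, G_{t+1} successively minimize their proximal least-squares subproblems against Y_{t+1}, with L_t = (U_{1t}, U_{2t}, U_{3t})·G_t. Then the objective Ψ(Y, L) = ‖L − Y‖²_F + λψ(Y) satisfies the combined descent inequality Ψ(Y_{t+1}, L_{t+1}) + α₁ Σ_{i=1}^{3} ‖U_{i,t+1} − U_{it}‖²_F + α₂‖G_{t+1} − G_t‖²_F ≤ Ψ(Y_t, L_t) for every t. -/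

import Mathlib

/-!
The proof is a majorize–minimize argument followed by a proximal chain. Since
`s ↦ 2γ(1 − exp(−s/(2γ)))` is concave, it lies below its tangent at any point, so the
surrogate `ψ̂(·; Z)` majorizes `ψ` and touches it at `Z`; minimizing `Ψ̂(·, L_t; Y_t)` over the
box, which contains `Y_t`, therefore does not increase `Ψ(·, L_t)`. Each proximal update, compared
with keeping the old factor (or core), lowers the fit `‖L − Y_{t+1}‖²_F` by at least its proximal
term, and the four updates telescope from `L_t` to `L_{t+1}`.
-/

/-- The Welsch loss ψ(Y) = 2γ Σ_p (1 − exp(−(Y_p − X_p)²/(2γ))). -/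
noncomputable def welsch {n1 n2 n3 : ℕ} (γ : ℝ) (X Y : Fin n1 × Fin n2 × Fin n3 → ℝ) : ℝ :=
  2 * γ * ∑ p : Fin n1 × Fin n2 × Fin n3, (1 - Real.exp (-(Y p - X p) ^ 2 / (2 * γ)))

/-- The exponential weight ω(Z)_p = exp(−(Z_p − X_p)²/(2γ)). -/
noncomputable def weight {n1 n2 n3 : ℕ} (γ : ℝ) (X Z : Fin n1 × Fin n2 × Fin n3 → ℝ) :
    Fin n1 × Fin n2 × Fin n3 → ℝ :=
  fun p => Real.exp (-(Z p - X p) ^ 2 / (2 * γ))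

/-- The quadratic surrogate ψ̂(Y; Z). -/
noncomputable def welschSurrogate {n1 n2 n3 : ℕ} (γ : ℝ)
    (X Y Z : Fin n1 × Fin n2 × Fin n3 → ℝ) : ℝ :=
  welsch γ X Z + ∑ p : Fin n1 × Fin n2 × Fin n3, weight γ X Z p * (Y p - X p) ^ 2
    - ∑ p : Fin n1 × Fin n2 × Fin n3, weight γ X Z p * (Z p - X p) ^ 2

/-- The objective Ψ(Y, L) = ‖L − Y‖²_F + λψ(Y). -/
noncomputable def PsiObj {n1 n2 n3 : ℕ} (γ lam : ℝ)
    (X Y L : Fin n1 × Fin n2 × Fin n3 → ℝ) : ℝ :=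
  (∑ p : Fin n1 × Fin n2 × Fin n3, (L p - Y p) ^ 2) + lam * welsch γ X Y

/-- The surrogate objective Ψ̂(Y, L; Z) = ‖L − Y‖²_F + λψ̂(Y; Z). -/
noncomputable def PsiSurrogate {n1 n2 n3 : ℕ} (γ lam : ℝ)
    (X Y L Z : Fin n1 × Fin n2 × Fin n3 → ℝ) : ℝ :=
  (∑ p : Fin n1 × Fin n2 × Fin n3, (L p - Y p) ^ 2) + lam * welschSurrogate γ X Y Z

/-- The Tucker multilinear action `(A₁, A₂, A₃)·G` of three matrices on a core tensor,
defined entrywise by `[(A₁, A₂, A₃)·G]_{ijk} = Σ_{a,b,c} (A₁)_{ia}(A₂)_{jb}(A₃)_{kc} G_{abc}`. -/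
noncomputable def tucker {m1 m2 m3 r1 r2 r3 : ℕ}
    (A1 : Matrix (Fin m1) (Fin r1) ℝ) (A2 : Matrix (Fin m2) (Fin r2) ℝ)
    (A3 : Matrix (Fin m3) (Fin r3) ℝ) (G : Fin r1 × Fin r2 × Fin r3 → ℝ) :
    Fin m1 × Fin m2 × Fin m3 → ℝ :=
  fun p => ∑ a, ∑ b, ∑ c, A1 p.1 a * A2 p.2.1 b * A3 p.2.2 c * G (a, b, c)

/-- Squared Frobenius norm of a matrix: the sum of squares of all entries. -/
noncomputable def frobSqM {n m : ℕ} (A : Matrix (Fin n) (Fin m) ℝ) : ℝ :=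
  ∑ i, ∑ j, A i j ^ 2

/-- Squared Frobenius norm of a tensor: the sum of squares of all entries. -/
noncomputable def frobSqT {n1 n2 n3 : ℕ} (Z : Fin n1 × Fin n2 × Fin n3 → ℝ) : ℝ :=
  ∑ p : Fin n1 × Fin n2 × Fin n3, Z p ^ 2

open Real

lemma mul_one_sub_exp_neg_div_le {c : ℝ} (hc : 0 < c) (s t : ℝ) :
    c * (1 - exp (-s / c)) ≤ c * (1 - exp (-t / c)) + exp (-t / c) * (s - t) := by
  have hsplit : exp (-s / c) = exp (-t / c) * exp ((t - s) / c) := by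
    rw [← exp_add]; ring_nf
  have htangent : exp (-t / c) * ((t - s) / c + 1) ≤ exp (-s / c) := by
    rw [hsplit]; gcongr; exact add_one_le_exp _
  have hscaled : exp (-t / c) * (t - s + c) ≤ c * exp (-s / c) := by
    calc exp (-t / c) * (t - s + c) = c * (exp (-t / c) * ((t - s) / c + 1)) := by
          field_simp
      _ ≤ c * exp (-s / c) := by gcongr
  linarith

section Welsch

variable {n1 n2 n3 : ℕ} {γ : ℝ} (X : Fin n1 × Fin n2 × Fin n3 → ℝ)

lemma welsch_le_welschSurrogate (hγ : 0 < γ) (Y Z : Fin n1 × Fin n2 × Fin n3 → ℝ) :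
    welsch γ X Y ≤ welschSurrogate γ X Y Z := by
  simp only [welschSurrogate, welsch, weight, Finset.mul_sum, ← Finset.sum_add_distrib,
    ← Finset.sum_sub_distrib]
  gcongr with p
  have := mul_one_sub_exp_neg_div_le (by positivity : 0 < 2 * γ) ((Y p - X p) ^ 2)
    ((Z p - X p) ^ 2)
  linarith

lemma welschSurrogate_self (Z : Fin n1 × Fin n2 × Fin n3 → ℝ) :
    welschSurrogate γ X Z Z = welsch γ X Z := by
  simp [welschSurrogate]

lemma PsiObj_le_PsiSurrogate {lam : ℝ} (hγ : 0 < γ) (hlam : 0 ≤ lam)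
    (Y L Z : Fin n1 × Fin n2 × Fin n3 → ℝ) :
    PsiObj γ lam X Y L ≤ PsiSurrogate γ lam X Y L Z := by
  unfold PsiObj PsiSurrogate
  gcongr
  exact welsch_le_welschSurrogate X hγ Y Z

lemma PsiSurrogate_self (lam : ℝ) (L Z : Fin n1 × Fin n2 × Fin n3 → ℝ) :
    PsiSurrogate γ lam X Z L Z = PsiObj γ lam X Z L := by
  rw [PsiSurrogate, PsiObj, welschSurrogate_self]

lemma PsiObj_le_of_PsiSurrogate_le {lam : ℝ} (hγ : 0 < γ) (hlam : 0 ≤ lam)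
    {Y' L Z : Fin n1 × Fin n2 × Fin n3 → ℝ}
    (h : PsiSurrogate γ lam X Y' L Z ≤ PsiSurrogate γ lam X Z L Z) :
    PsiObj γ lam X Y' L ≤ PsiObj γ lam X Z L :=
  calc PsiObj γ lam X Y' L ≤ PsiSurrogate γ lam X Y' L Z := PsiObj_le_PsiSurrogate X hγ hlam _ _ _
    _ ≤ PsiSurrogate γ lam X Z L Z := h
    _ = PsiObj γ lam X Z L := PsiSurrogate_self X lam L Z

lemma PsiObj_eq_frobSqT (lam : ℝ) (Y L : Fin n1 × Fin n2 × Fin n3 → ℝ) :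
    PsiObj γ lam X Y L = frobSqT (L - Y) + lam * welsch γ X Y :=
  rfl

end Welsch

@[simp]
lemma frobSqM_zero {n m : ℕ} : frobSqM (0 : Matrix (Fin n) (Fin m) ℝ) = 0 := by
  simp [frobSqM]

@[simp]
lemma frobSqT_zero {n1 n2 n3 : ℕ} : frobSqT (0 : Fin n1 × Fin n2 × Fin n3 → ℝ) = 0 := by
  simp [frobSqT]

theorem sdao_combined_descent_general {n1 n2 n3 r1 r2 r3 : ℕ}
    (γ lam a α1 α2 : ℝ) (hγ : 0 < γ) (hlam : 0 < lam)
    (X : Fin n1 × Fin n2 × Fin n3 → ℝ)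
    (Y : ℕ → (Fin n1 × Fin n2 × Fin n3 → ℝ))
    (U1 : ℕ → Matrix (Fin n1) (Fin r1) ℝ) (U2 : ℕ → Matrix (Fin n2) (Fin r2) ℝ)
    (U3 : ℕ → Matrix (Fin n3) (Fin r3) ℝ) (G : ℕ → (Fin r1 × Fin r2 × Fin r3 → ℝ))
    (L : ℕ → (Fin n1 × Fin n2 × Fin n3 → ℝ))
    (hL : ∀ t, L t = tucker (U1 t) (U2 t) (U3 t) (G t))
    (hYbox : ∀ t, ∀ p, |Y t p| ≤ a)
    (hYmin : ∀ t, ∀ Y' : Fin n1 × Fin n2 × Fin n3 → ℝ, (∀ p, |Y' p| ≤ a) →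
      PsiSurrogate γ lam X (Y (t + 1)) (L t) (Y t) ≤ PsiSurrogate γ lam X Y' (L t) (Y t))
    (hU1 : ∀ t, ∀ V : Matrix (Fin n1) (Fin r1) ℝ,
      frobSqT (tucker (U1 (t + 1)) (U2 t) (U3 t) (G t) - Y (t + 1))
          + α1 * frobSqM (U1 (t + 1) - U1 t)
        ≤ frobSqT (tucker V (U2 t) (U3 t) (G t) - Y (t + 1)) + α1 * frobSqM (V - U1 t))
    (hU2 : ∀ t, ∀ V : Matrix (Fin n2) (Fin r2) ℝ,
      frobSqT (tucker (U1 (t + 1)) (U2 (t + 1)) (U3 t) (G t) - Y (t + 1))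
          + α1 * frobSqM (U2 (t + 1) - U2 t)
        ≤ frobSqT (tucker (U1 (t + 1)) V (U3 t) (G t) - Y (t + 1)) + α1 * frobSqM (V - U2 t))
    (hU3 : ∀ t, ∀ V : Matrix (Fin n3) (Fin r3) ℝ,
      frobSqT (tucker (U1 (t + 1)) (U2 (t + 1)) (U3 (t + 1)) (G t) - Y (t + 1))
          + α1 * frobSqM (U3 (t + 1) - U3 t)
        ≤ frobSqT (tucker (U1 (t + 1)) (U2 (t + 1)) V (G t) - Y (t + 1))
          + α1 * frobSqM (V - U3 t))
    (hG : ∀ t, ∀ H : Fin r1 × Fin r2 × Fin r3 → ℝ,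
      frobSqT (tucker (U1 (t + 1)) (U2 (t + 1)) (U3 (t + 1)) (G (t + 1)) - Y (t + 1))
          + α2 * frobSqT (G (t + 1) - G t)
        ≤ frobSqT (tucker (U1 (t + 1)) (U2 (t + 1)) (U3 (t + 1)) H - Y (t + 1))
          + α2 * frobSqT (H - G t)) :
    ∀ t, PsiObj γ lam X (Y (t + 1)) (L (t + 1))
        + α1 * (frobSqM (U1 (t + 1) - U1 t) + frobSqM (U2 (t + 1) - U2 t)
            + frobSqM (U3 (t + 1) - U3 t))
        + α2 * frobSqT (G (t + 1) - G t)
      ≤ PsiObj γ lam X (Y t) (L t) := by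
  intro t
  have hY : PsiObj γ lam X (Y (t + 1)) (L t) ≤ PsiObj γ lam X (Y t) (L t) :=
    PsiObj_le_of_PsiSurrogate_le X hγ hlam.le (hYmin t (Y t) (hYbox t))
  have hU1' := hU1 t (U1 t)
  have hU2' := hU2 t (U2 t)
  have hU3' := hU3 t (U3 t)
  have hG' := hG t (G t)
  simp only [sub_self, frobSqM_zero, frobSqT_zero, mul_zero, add_zero] at hU1' hU2' hU3' hG'
  rw [PsiObj_eq_frobSqT, PsiObj_eq_frobSqT, hL t] at hY
  rw [PsiObj_eq_frobSqT, PsiObj_eq_frobSqT, hL t, hL (t + 1)]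
  linarith

/-- Combined descent of the SDAO algorithm: if `Y_{t+1}` minimizes the surrogate
`Ψ̂(·, L_t; Y_t)` over the box `B = {Y : ‖Y‖_∞ ≤ a}` and the Tucker factors and core are
updated by successive exact minimization of their proximal least-squares subproblems against
`Y_{t+1}`, then the objective `Ψ` decreases by at least the accumulated proximal terms. -/
theorem sdao_combined_descent {n1 n2 n3 r1 r2 r3 : ℕ}
    (γ lam a α1 α2 : ℝ) (hγ : 0 < γ) (hlam : 0 < lam) (ha : 0 < a)
    (hα1 : 0 < α1) (hα2 : 0 < α2)
    (X : Fin n1 × Fin n2 × Fin n3 → ℝ)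
    (Y : ℕ → (Fin n1 × Fin n2 × Fin n3 → ℝ))
    (U1 : ℕ → Matrix (Fin n1) (Fin r1) ℝ) (U2 : ℕ → Matrix (Fin n2) (Fin r2) ℝ)
    (U3 : ℕ → Matrix (Fin n3) (Fin r3) ℝ) (G : ℕ → (Fin r1 × Fin r2 × Fin r3 → ℝ))
    (L : ℕ → (Fin n1 × Fin n2 × Fin n3 → ℝ))
    (hL : ∀ t, L t = tucker (U1 t) (U2 t) (U3 t) (G t))
    (hYbox : ∀ t, ∀ p, |Y t p| ≤ a)
    (hYmin : ∀ t, ∀ Y' : Fin n1 × Fin n2 × Fin n3 → ℝ, (∀ p, |Y' p| ≤ a) →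
      PsiSurrogate γ lam X (Y (t + 1)) (L t) (Y t) ≤ PsiSurrogate γ lam X Y' (L t) (Y t))
    (hU1 : ∀ t, ∀ V : Matrix (Fin n1) (Fin r1) ℝ,
      frobSqT (tucker (U1 (t + 1)) (U2 t) (U3 t) (G t) - Y (t + 1))
          + α1 * frobSqM (U1 (t + 1) - U1 t)
        ≤ frobSqT (tucker V (U2 t) (U3 t) (G t) - Y (t + 1)) + α1 * frobSqM (V - U1 t))
    (hU2 : ∀ t, ∀ V : Matrix (Fin n2) (Fin r2) ℝ,
      frobSqT (tucker (U1 (t + 1)) (U2 (t + 1)) (U3 t) (G t) - Y (t + 1))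
          + α1 * frobSqM (U2 (t + 1) - U2 t)
        ≤ frobSqT (tucker (U1 (t + 1)) V (U3 t) (G t) - Y (t + 1)) + α1 * frobSqM (V - U2 t))
    (hU3 : ∀ t, ∀ V : Matrix (Fin n3) (Fin r3) ℝ,
      frobSqT (tucker (U1 (t + 1)) (U2 (t + 1)) (U3 (t + 1)) (G t) - Y (t + 1))
          + α1 * frobSqM (U3 (t + 1) - U3 t)
        ≤ frobSqT (tucker (U1 (t + 1)) (U2 (t + 1)) V (G t) - Y (t + 1))
          + α1 * frobSqM (V - U3 t))
    (hG : ∀ t, ∀ H : Fin r1 × Fin r2 × Fin r3 → ℝ,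
      frobSqT (tucker (U1 (t + 1)) (U2 (t + 1)) (U3 (t + 1)) (G (t + 1)) - Y (t + 1))
          + α2 * frobSqT (G (t + 1) - G t)
        ≤ frobSqT (tucker (U1 (t + 1)) (U2 (t + 1)) (U3 (t + 1)) H - Y (t + 1))
          + α2 * frobSqT (H - G t)) :
    ∀ t, PsiObj γ lam X (Y (t + 1)) (L (t + 1))
        + α1 * (frobSqM (U1 (t + 1) - U1 t) + frobSqM (U2 (t + 1) - U2 t)
            + frobSqM (U3 (t + 1) - U3 t))
        + α2 * frobSqT (G (t + 1) - G t)
      ≤ PsiObj γ lam X (Y t) (L t) :=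
  sdao_combined_descent_general γ lam a α1 α2 hγ hlam X Y U1 U2 U3 G L hL hYbox hYmin hU1 hU2 hU3 hG
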